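/- For every integer n ≥ 3, C_n/n = Σ_{k=1}^{n−3} (−1)^{k+1} · 2^{k−1}/k! − (1/n) · (−1)^{n} · 2^{n−3}/(n−3)!. -/

import Mathlib

/-!
Since `m - k + 1 = (m + 3) - (k + 2)`, the segment value `L_m` splits as `(m + 3)` times the
partial sum `Σ_{k ≤ m} (-1)^(k+1) 2^(k-1)/k!` minus the weighted sum of the same terms with weights
`k + 2`. The weighted sum telescopes: with `t k = (-1)^k 2^k/k!`, the `k`-th weighted term equals
`t (k - 1) - t k`, so it sums to `1 - t m`. Hence `C_{m+3} = (m + 3) · (partial sum) + t m`, and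
dividing by `n = m + 3` gives the formula.
-/

/-- `Lseg n = Σ_{k=1}^{n} (−1)^{k+1} (2^{k−1}/k!) (n−k+1)`, the expected number of
transmissions in one slot from a fully occupied segment of `n` nodes (so `Lseg 0 = 0`). -/
noncomputable def Lseg (n : ℕ) : ℝ :=
  ∑ k ∈ Finset.Icc 1 n,
    (-1 : ℝ) ^ (k + 1) * (2 ^ (k - 1) / (Nat.factorial k : ℝ)) * ((n : ℝ) - (k : ℝ) + 1)

/-- `C_k = 1 + L_{k−3}`, the expected number of transmissions in one slot from a fully
occupied circle of `k ≥ 3` nodes. -/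
noncomputable def Ccirc (k : ℕ) : ℝ := 1 + Lseg (k - 3)

open Finset Nat

lemma sum_Icc_alternating_mul_add_two (m : ℕ) :
    ∑ k ∈ Icc 1 m, (-1 : ℝ) ^ (k + 1) * (2 ^ (k - 1) / (k ! : ℝ)) * ((k : ℝ) + 2)
      = 1 - (-1 : ℝ) ^ m * (2 ^ m / (m ! : ℝ)) := by
  induction m with
  | zero => simp
  | succ m ih =>
    rw [sum_Icc_succ_top (by omega), ih, Nat.add_sub_cancel, Nat.factorial_succ]
    have hm : (m ! : ℝ) ≠ 0 := by positivity
    push_cast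
    field_simp
    ring

lemma Lseg_eq (m : ℕ) :
    Lseg m = ((m : ℝ) + 3) * ∑ k ∈ Icc 1 m, (-1 : ℝ) ^ (k + 1) * (2 ^ (k - 1) / (k ! : ℝ))
      - ∑ k ∈ Icc 1 m, (-1 : ℝ) ^ (k + 1) * (2 ^ (k - 1) / (k ! : ℝ)) * ((k : ℝ) + 2) := by
  rw [Lseg, mul_sum, ← sum_sub_distrib]
  exact sum_congr rfl fun k _ => by ring

lemma Ccirc_add_three (m : ℕ) :
    Ccirc (m + 3) = ((m : ℝ) + 3) * ∑ k ∈ Icc 1 m, (-1 : ℝ) ^ (k + 1) * (2 ^ (k - 1) / (k ! : ℝ))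
      + (-1 : ℝ) ^ m * (2 ^ m / (m ! : ℝ)) := by
  rw [Ccirc, Nat.add_sub_cancel, Lseg_eq, sum_Icc_alternating_mul_add_two]
  ring

theorem Ccirc_div_formula (n : ℕ) (hn : 3 ≤ n) :
    Ccirc n / (n : ℝ) =
      (∑ k ∈ Finset.Icc 1 (n - 3), (-1 : ℝ) ^ (k + 1) * (2 ^ (k - 1) / (Nat.factorial k : ℝ)))
        - (1 / (n : ℝ)) * (-1 : ℝ) ^ n * (2 ^ (n - 3) / (Nat.factorial (n - 3) : ℝ)) := by
  obtain ⟨m, rfl⟩ : ∃ m, n = m + 3 := ⟨n - 3, by omega⟩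
  have hm : (m : ℝ) + 3 ≠ 0 := by positivity
  rw [Ccirc_add_three, Nat.add_sub_cancel, pow_add (-1 : ℝ) m 3]
  push_cast
  field_simp
  ring
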